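/- Let f_λ(p) and f_u(p) denote the ridge and unregularized reduced objectives for a continuous matrix family M(p) with uniform full column rank on a compact set 𝒫. If λ_k ↓ 0 and p_k minimizes f_{λ_k}, then f_u(p_k) → min_{p∈𝒫} f_u(p) as k → ∞. -/

import Mathlib

/-!
Since `λ ≥ 0`, `f_u ≤ f_λ`; hence for every `p ∈ 𝒫` and every weight `w`,
`f_u(p_k) ≤ f_{λ_k}(p_k) ≤ f_{λ_k}(p) ≤ ½‖M(p) w - y‖² + (λ_k/2)‖w‖²`, and the right-hand side
tends to `½‖M(p) w - y‖²`, which can be chosen arbitrarily close to `inf_𝒫 f_u`.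
-/

open Matrix Filter Topology

noncomputable def sqnorm {k : ℕ} (v : Fin k → ℝ) : ℝ := ∑ i, v i ^ 2

noncomputable def ridgeMin {n m : ℕ} (A : Matrix (Fin n) (Fin m) ℝ)
    (y : Fin n → ℝ) (lam : ℝ) : ℝ :=
  ⨅ w : Fin m → ℝ, ((1 / 2) * sqnorm (A *ᵥ w - y) + (lam / 2) * sqnorm w)

noncomputable def lsqMin {n m : ℕ} (A : Matrix (Fin n) (Fin m) ℝ)
    (y : Fin n → ℝ) : ℝ :=
  ⨅ w : Fin m → ℝ, (1 / 2) * sqnorm (A *ᵥ w - y)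

lemma sqnorm_nonneg {k : ℕ} (v : Fin k → ℝ) : 0 ≤ sqnorm v :=
  Finset.sum_nonneg fun i _ => sq_nonneg (v i)

section Objectives

variable {n m : ℕ} (A : Matrix (Fin n) (Fin m) ℝ) (y : Fin n → ℝ)

lemma bddBelow_range_lsq :
    BddBelow (Set.range fun w : Fin m → ℝ => (1 / 2) * sqnorm (A *ᵥ w - y)) := by
  refine ⟨0, ?_⟩
  rintro _ ⟨w, rfl⟩
  have := sqnorm_nonneg (A *ᵥ w - y)
  positivity

lemma bddBelow_range_ridge {lam : ℝ} (hlam : 0 ≤ lam) :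
    BddBelow (Set.range fun w : Fin m → ℝ =>
      (1 / 2) * sqnorm (A *ᵥ w - y) + (lam / 2) * sqnorm w) := by
  refine ⟨0, ?_⟩
  rintro _ ⟨w, rfl⟩
  have := sqnorm_nonneg (A *ᵥ w - y)
  have := sqnorm_nonneg w
  positivity

lemma lsqMin_nonneg : 0 ≤ lsqMin A y := by
  refine le_ciInf fun w => ?_
  have := sqnorm_nonneg (A *ᵥ w - y)
  positivity

lemma lsqMin_le_ridgeMin {lam : ℝ} (hlam : 0 ≤ lam) : lsqMin A y ≤ ridgeMin A y lam :=
  ciInf_mono (bddBelow_range_lsq A y) fun w =>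
    le_add_of_nonneg_right (mul_nonneg (by positivity) (sqnorm_nonneg w))

lemma ridgeMin_le {lam : ℝ} (hlam : 0 ≤ lam) (w : Fin m → ℝ) :
    ridgeMin A y lam ≤ (1 / 2) * sqnorm (A *ᵥ w - y) + (lam / 2) * sqnorm w :=
  ciInf_le (bddBelow_range_ridge A y hlam) w

lemma tendsto_ridge_objective {ι : Type*} {l : Filter ι} {lam : ι → ℝ}
    (hlam : Tendsto lam l (𝓝 0)) (w : Fin m → ℝ) :
    Tendsto (fun i => (1 / 2) * sqnorm (A *ᵥ w - y) + (lam i / 2) * sqnorm w) l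
      (𝓝 ((1 / 2) * sqnorm (A *ᵥ w - y))) := by
  simpa using tendsto_const_nhds.add ((hlam.div_const 2).mul_const (sqnorm w))

end Objectives

theorem ridge_objective_value_convergence_general (d n m : ℕ)
    (P : Set (Fin d → ℝ))
    (M : (Fin d → ℝ) → Matrix (Fin n) (Fin m) ℝ)
    (y : Fin n → ℝ)
    (lamSeq : ℕ → ℝ) (hpos : ∀ k, 0 < lamSeq k)
    (hlim : Tendsto lamSeq atTop (𝓝 0))
    (pk : ℕ → (Fin d → ℝ)) (hpkP : ∀ k, pk k ∈ P)
    (hmin : ∀ k, ∀ q ∈ P, ridgeMin (M (pk k)) y (lamSeq k) ≤ ridgeMin (M q) y (lamSeq k)) :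
    Tendsto (fun k => lsqMin (M (pk k)) y) atTop
      (𝓝 (sInf ((fun p => lsqMin (M p) y) '' P))) := by
  set S := (fun p => lsqMin (M p) y) '' P
  have hS : BddBelow S := ⟨0, by rintro _ ⟨p, -, rfl⟩; exact lsqMin_nonneg _ _⟩
  refine tendsto_order.2 ⟨fun a ha => Eventually.of_forall fun k =>
    ha.trans_le (csInf_le hS ⟨pk k, hpkP k, rfl⟩), fun b hb => ?_⟩
  obtain ⟨_, ⟨p, hp, rfl⟩, hpb⟩ :=
    exists_lt_of_csInf_lt (Set.Nonempty.image _ ⟨pk 0, hpkP 0⟩) hb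
  obtain ⟨w, hwb⟩ := exists_lt_of_ciInf_lt hpb
  filter_upwards [(tendsto_ridge_objective (M p) y hlim w).eventually (gt_mem_nhds hwb)]
    with k hk
  calc lsqMin (M (pk k)) y ≤ ridgeMin (M (pk k)) y (lamSeq k) :=
        lsqMin_le_ridgeMin _ _ (hpos k).le
    _ ≤ ridgeMin (M p) y (lamSeq k) := hmin k p hp
    _ ≤ (1 / 2) * sqnorm (M p *ᵥ w - y) + (lamSeq k / 2) * sqnorm w :=
        ridgeMin_le _ _ (hpos k).le w
    _ < b := hk

/-- In the setting of the consistency theorem (compact `𝒫`, continuous `M` with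
uniform full column rank), if `λ_k ↓ 0` and `p_k` minimizes `f_{λ_k}`, then
`f_u(p_k) → min_{p∈𝒫} f_u(p)` as `k → ∞`. -/
theorem ridge_objective_value_convergence (d n m : ℕ)
    (P : Set (Fin d → ℝ)) (hPc : IsCompact P) (hPne : P.Nonempty)
    (M : (Fin d → ℝ) → Matrix (Fin n) (Fin m) ℝ) (hM : ContinuousOn M P)
    (hrank : ∀ p ∈ P, (M p).rank = m)
    (y : Fin n → ℝ)
    (lamSeq : ℕ → ℝ) (hpos : ∀ k, 0 < lamSeq k) (hanti : Antitone lamSeq)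
    (hlim : Tendsto lamSeq atTop (𝓝 0))
    (pk : ℕ → (Fin d → ℝ)) (hpkP : ∀ k, pk k ∈ P)
    (hmin : ∀ k, ∀ q ∈ P, ridgeMin (M (pk k)) y (lamSeq k) ≤ ridgeMin (M q) y (lamSeq k)) :
    Tendsto (fun k => lsqMin (M (pk k)) y) atTop
      (𝓝 (sInf ((fun p => lsqMin (M p) y) '' P))) :=
  ridge_objective_value_convergence_general d n m P M y lamSeq hpos hlim pk hpkP hmin
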